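/- Let (G,⊕) be a finite group and let L(G) be its Cayley table Latin square. Let ℓ₁,…,ℓ_k be distinct lines of L(G), fix a row r ∈ G and a column c ∈ G, and for each i define c_i* ∈ G by: c_i* = g if ℓ_i is the column-line of g; c_i* = r⁻¹ ⊕ g if ℓ_i is the symbol-line of g; c_i* = r⁻¹ ⊕ g ⊕ c if ℓ_i is the row-line of g. Set s_i = c_i* ⊕ c⁻¹ and let K = ⟨s₁,…,s_k⟩ be the subgroup of G generated by s₁,…,s_k. If S is a subsquare of L(G) that intersects the row-line of r, the column-line of c, and each line ℓ_i, and S is contained in every subsquare of L(G) with that property, then the set of columns intersecting S equals the coset K ⊕ c = {h ⊕ c : h ∈ K} and the set of rows intersecting S equals the coset r ⊕ K = {r ⊕ h : h ∈ K}. -/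

import Mathlib

open Finset

/-- An entry of a Latin square with rows/columns/symbols indexed by `X`. -/
abbrev Entry (X : Type*) := X × X × X

/-- A line of a Latin square: a tag (0 = row, 1 = column, 2 = symbol) and an index. -/
abbrev Line (X : Type*) := Fin 3 × X

/-- The entry `e` lies on the line `ℓ`. -/
def onLine {X : Type*} (e : Entry X) (ℓ : Line X) : Prop :=
  (ℓ.1 = 0 ∧ e.1 = ℓ.2) ∨ (ℓ.1 = 1 ∧ e.2.1 = ℓ.2) ∨ (ℓ.1 = 2 ∧ e.2.2 = ℓ.2)

instance {X : Type*} [DecidableEq X] (e : Entry X) (ℓ : Line X) : Decidable (onLine e ℓ) := by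
  unfold onLine; infer_instance

/-- `L` is a Latin square (on the full index set `X`). -/
def IsLatin {X : Type*} (L : Finset (Entry X)) : Prop :=
  (∀ r c : X, ∃! s : X, (r, c, s) ∈ L) ∧
  (∀ r s : X, ∃! c : X, (r, c, s) ∈ L) ∧
  (∀ c s : X, ∃! r : X, (r, c, s) ∈ L)

/-- Lazy-burning closure in the hypergraph `H_L`: vertices are the entries of `L`,
hyperedges are the lines of `L`; a vertex burns if it is the unique unburned vertex of
a hyperedge of size at least 2. -/
inductive BurnedHL {X : Type*} [DecidableEq X] (L S : Finset (Entry X)) : Entry X → Prop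
  | init {e : Entry X} : e ∈ S → BurnedHL L S e
  | prop {e : Entry X} (ℓ : Line X) : e ∈ L → onLine e ℓ →
      2 ≤ (L.filter (fun f => onLine f ℓ)).card →
      (∀ f ∈ L, onLine f ℓ → f ≠ e → BurnedHL L S f) → BurnedHL L S e

/-- `S` is a lazy burning set of the hypergraph `H_L`. -/
def IsLazyBurningSetHL {X : Type*} [DecidableEq X] (L S : Finset (Entry X)) : Prop :=
  S ⊆ L ∧ ∀ e ∈ L, BurnedHL L S e

/-- The lazy burning number of `H_L`. -/
noncomputable def lbHL {X : Type*} [DecidableEq X] (L : Finset (Entry X)) : ℕ :=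
  sInf {k | ∃ S : Finset (Entry X), IsLazyBurningSetHL L S ∧ S.card = k}

/-- A cover of `L`: a set of entries of `L` meeting every line. -/
def IsCover {X : Type*} (L C : Finset (Entry X)) : Prop :=
  C ⊆ L ∧ ∀ ℓ : Line X, ∃ e ∈ C, onLine e ℓ

/-- A weak cover-sequence of `L`: each entry lies on a line containing no earlier entry. -/
def IsWeakCoverSeq {X : Type*} (L : Finset (Entry X)) (es : List (Entry X)) : Prop :=
  (∀ e ∈ es, e ∈ L) ∧
  ∀ i : Fin es.length, ∃ ℓ : Line X, onLine (es.get i) ℓ ∧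
    ∀ j : Fin es.length, (j : ℕ) < (i : ℕ) → ¬ onLine (es.get j) ℓ

/-- A cover-sequence of `L`: a weak cover-sequence whose entries form a cover. -/
def IsCoverSeq {X : Type*} (L : Finset (Entry X)) (es : List (Entry X)) : Prop :=
  IsWeakCoverSeq L es ∧ ∀ ℓ : Line X, ∃ e ∈ es, onLine e ℓ

/-- `mcs L`: the maximum length of a cover-sequence of `L`. -/
noncomputable def mcs {X : Type*} (L : Finset (Entry X)) : ℕ :=
  sSup {d | ∃ es : List (Entry X), IsCoverSeq L es ∧ es.length = d}

/-- `T` is a subsquare of `L`: `T = L ∩ (R × C × S)` with `|R| = |C| = |S|`, and `T`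
is itself a Latin square on rows `R`, columns `C`, symbols `S`. -/
def IsSubsquare {X : Type*} [DecidableEq X] (L T : Finset (Entry X)) : Prop :=
  ∃ R C S : Finset X, R.card = C.card ∧ C.card = S.card ∧
    T = L.filter (fun e => e.1 ∈ R ∧ e.2.1 ∈ C ∧ e.2.2 ∈ S) ∧
    (∀ r ∈ R, ∀ c ∈ C, ∃! s, s ∈ S ∧ (r, c, s) ∈ T) ∧
    (∀ r ∈ R, ∀ s ∈ S, ∃! c, c ∈ C ∧ (r, c, s) ∈ T) ∧
    (∀ c ∈ C, ∀ s ∈ S, ∃! r, r ∈ R ∧ (r, c, s) ∈ T)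

/-- `Sq 0 ⊆ Sq 1 ⊆ ⋯ ⊆ Sq α` is a connected chain of subsquares of `L`, from the empty
subsquare through a single entry up to `L` itself. -/
def IsConnectedChain {X : Type*} [DecidableEq X] (L : Finset (Entry X)) (α : ℕ)
    (Sq : ℕ → Finset (Entry X)) : Prop :=
  1 ≤ α ∧ Sq 0 = ∅ ∧ (Sq 1).card = 1 ∧ Sq α = L ∧
  (∀ i ≤ α, IsSubsquare L (Sq i)) ∧
  (∀ i < α, Sq i ⊆ Sq (i + 1)) ∧
  (∀ i, 1 ≤ i → i ≤ α → ∃ ℓ : Line X,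
      (∃ e ∈ Sq i, onLine e ℓ) ∧ ¬(∃ e ∈ Sq (i - 1), onLine e ℓ) ∧
      (∀ T, IsSubsquare L T → Sq (i - 1) ⊆ T → (∃ e ∈ T, onLine e ℓ) → Sq i ⊆ T))

/-- `scc L`: the minimum length of a connected chain of subsquares of `L`. -/
noncomputable def scc {X : Type*} [DecidableEq X] (L : Finset (Entry X)) : ℕ :=
  sInf {α | ∃ Sq : ℕ → Finset (Entry X), IsConnectedChain L α Sq}

/-- Lazy-burning closure in the 3-uniform hypergraph `H^L`: vertices are the lines of `L`,
and each entry of `L` induces the hyperedge consisting of its three lines. -/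
inductive BurnedH3 {X : Type*} (L : Finset (Entry X)) (S : Finset (Line X)) : Line X → Prop
  | init {ℓ : Line X} : ℓ ∈ S → BurnedH3 L S ℓ
  | prop {ℓ : Line X} (e : Entry X) : e ∈ L → onLine e ℓ →
      (∀ ℓ' : Line X, onLine e ℓ' → ℓ' ≠ ℓ → BurnedH3 L S ℓ') → BurnedH3 L S ℓ

/-- `S` is a lazy burning set of the 3-uniform hypergraph `H^L`. -/
def IsLazyBurningSetH3 {X : Type*} (L : Finset (Entry X)) (S : Finset (Line X)) : Prop :=
  ∀ ℓ : Line X, BurnedH3 L S ℓ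

/-- The lazy burning number of `H^L`. -/
noncomputable def lbH3 {X : Type*} (L : Finset (Entry X)) : ℕ :=
  sInf {k | ∃ S : Finset (Line X), IsLazyBurningSetH3 L S ∧ S.card = k}

/-! A subsquare of the Cayley table that meets row `r` and column `c` is a coset square: for
some subgroup `H` its rows, columns and symbols are `r * H`, `H * c` and `r * H * c`. A coset
square meets a line exactly when the line's offset (the `s_i` of the statement) lies in `H`.
So `K ≤ H` for the given `S`, while the coset square of `K` is itself a subsquare meeting all the
prescribed lines, and minimality of `S` gives `H ≤ K`. -/

@[simp] lemma onLine_row {X : Type*} {e : Entry X} {g : X} : onLine e (0, g) ↔ e.1 = g := by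
  simp [onLine]

@[simp] lemma onLine_col {X : Type*} {e : Entry X} {g : X} : onLine e (1, g) ↔ e.2.1 = g := by
  simp [onLine]

@[simp] lemma onLine_sym {X : Type*} {e : Entry X} {g : X} : onLine e (2, g) ↔ e.2.2 = g := by
  simp [onLine]

section Closed

variable {G : Type*} [Group G]

structure CayleyClosed (R C Sy : Finset G) : Prop where
  mul_mem : ∀ a ∈ R, ∀ b ∈ C, a * b ∈ Sy
  inv_mul_mem : ∀ a ∈ R, ∀ s ∈ Sy, a⁻¹ * s ∈ C
  mul_inv_mem : ∀ b ∈ C, ∀ s ∈ Sy, s * b⁻¹ ∈ R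

namespace CayleyClosed

variable {R C Sy : Finset G} (h : CayleyClosed R C Sy) {r c : G} (hr : r ∈ R) (hc : c ∈ C)
include h hr hc

lemma mem_rows_iff {a : G} : a ∈ R ↔ r⁻¹ * a * c ∈ C := by
  refine ⟨fun ha => ?_, fun ha => ?_⟩
  · simpa only [mul_assoc] using h.inv_mul_mem r hr _ (h.mul_mem a ha c hc)
  · simpa [mul_assoc] using h.mul_inv_mem c hc _ (h.mul_mem r hr _ ha)

/-- The subgroup `H` with `C = H * c`, `R = r * H` and `Sy = r * H * c`. -/
def colSubgroup : Subgroup G where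
  carrier := {x | x * c ∈ C}
  one_mem' := by simpa using hc
  mul_mem' {x y} hx hy := by
    have hrx : r * x ∈ R := (h.mem_rows_iff hr hc).2 (by simpa using hx)
    simpa [mul_assoc] using h.inv_mul_mem r hr _ (h.mul_mem _ hrx _ hy)
  inv_mem' {x} hx := by
    have hrx : r * x ∈ R := (h.mem_rows_iff hr hc).2 (by simpa using hx)
    simpa [mul_assoc] using h.inv_mul_mem _ hrx _ (h.mul_mem r hr c hc)

lemma mem_colSubgroup {x : G} : x ∈ h.colSubgroup hr hc ↔ x * c ∈ C := Iff.rfl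

end CayleyClosed

end Closed

section Cayley

variable {G : Type*} [Group G] [Fintype G] [DecidableEq G]

variable (G) in
def cayley : Finset (Entry G) :=
  univ.filter fun e => e.1 * e.2.1 = e.2.2

@[simp] lemma mem_cayley {e : Entry G} : e ∈ cayley G ↔ e.1 * e.2.1 = e.2.2 := by
  simp [cayley]

lemma isSubsquare_cayley_filter {R C Sy : Finset G} (hRC : #R = #C) (hCS : #C = #Sy)
    (h : CayleyClosed R C Sy) :
    IsSubsquare (cayley G) ((cayley G).filter fun e => e.1 ∈ R ∧ e.2.1 ∈ C ∧ e.2.2 ∈ Sy) := by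
  refine ⟨R, C, Sy, hRC, hCS, rfl, ?_, ?_, ?_⟩
  · intro a ha b hb
    refine ⟨a * b, ⟨h.mul_mem a ha b hb, ?_⟩, fun s hs => ?_⟩
    · simp [ha, hb, h.mul_mem a ha b hb]
    · simp_all
  · intro a ha s hs
    refine ⟨a⁻¹ * s, ⟨h.inv_mul_mem a ha s hs, ?_⟩, fun b hb => ?_⟩
    · simp [ha, hs, h.inv_mul_mem a ha s hs]
    · simp only [mem_filter, mem_cayley] at hb
      rw [← hb.2.1, inv_mul_cancel_left]
  · intro b hb s hs
    refine ⟨s * b⁻¹, ⟨h.mul_inv_mem b hb s hs, ?_⟩, fun a ha => ?_⟩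
    · simp [hb, hs, h.mul_inv_mem b hb s hs]
    · simp only [mem_filter, mem_cayley] at ha
      rw [← ha.2.1, mul_inv_cancel_right]

lemma exists_cayleyClosed_of_isSubsquare {S : Finset (Entry G)} (hS : IsSubsquare (cayley G) S) :
    ∃ R C Sy : Finset G, CayleyClosed R C Sy ∧
      S = (cayley G).filter fun e => e.1 ∈ R ∧ e.2.1 ∈ C ∧ e.2.2 ∈ Sy := by
  obtain ⟨R, C, Sy, -, -, rfl, hrc, hrs, hcs⟩ := hS
  have mul_eq {a b s : G} (h : (a, b, s) ∈ (cayley G).filter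
      fun e => e.1 ∈ R ∧ e.2.1 ∈ C ∧ e.2.2 ∈ Sy) : a * b = s := mem_cayley.1 (mem_filter.1 h).1
  refine ⟨R, C, Sy, ⟨fun a ha b hb => ?_, fun a ha s hs => ?_, fun b hb s hs => ?_⟩, rfl⟩
  · obtain ⟨s, ⟨hs, hmem⟩, -⟩ := hrc a ha b hb
    rwa [mul_eq hmem]
  · obtain ⟨b, ⟨hb, hmem⟩, -⟩ := hrs a ha s hs
    rwa [← mul_eq hmem, inv_mul_cancel_left]
  · obtain ⟨a, ⟨ha, hmem⟩, -⟩ := hcs b hb s hs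
    rwa [← mul_eq hmem, mul_inv_cancel_right]

open Classical in
/-- The subsquare on rows `r * K`, columns `K * c` and symbols `r * K * c`. -/
noncomputable def cosetSquare (K : Subgroup G) (r c : G) : Finset (Entry G) :=
  (cayley G).filter fun e => r⁻¹ * e.1 ∈ K ∧ e.2.1 * c⁻¹ ∈ K

lemma mem_cosetSquare {K : Subgroup G} {r c : G} {e : Entry G} :
    e ∈ cosetSquare K r c ↔ e.1 * e.2.1 = e.2.2 ∧ r⁻¹ * e.1 ∈ K ∧ e.2.1 * c⁻¹ ∈ K := by
  simp [cosetSquare]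

lemma isSubsquare_cosetSquare (K : Subgroup G) (r c : G) :
    IsSubsquare (cayley G) (cosetSquare K r c) := by
  classical
  let R := univ.filter fun a => r⁻¹ * a ∈ K
  let C := univ.filter fun b => b * c⁻¹ ∈ K
  let Sy := univ.filter fun s => r⁻¹ * s * c⁻¹ ∈ K
  have hRC : #R = #C := card_equiv ((Equiv.mulLeft r⁻¹).trans (Equiv.mulRight c)) fun a => by
    simp [R, C, mul_assoc]
  have hCS : #C = #Sy := card_equiv (Equiv.mulLeft r) fun b => by simp [C, Sy, mul_assoc]
  have hclosed : CayleyClosed R C Sy := by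
    refine ⟨fun a ha b hb => ?_, fun a ha s hs => ?_, fun b hb s hs => ?_⟩
    all_goals simp only [R, C, Sy, mem_filter, mem_univ, true_and] at *
    · simpa [mul_assoc] using K.mul_mem ha hb
    · simpa [mul_assoc] using K.mul_mem (K.inv_mem ha) hs
    · simpa [mul_assoc] using K.mul_mem hs (K.inv_mem hb)
  convert isSubsquare_cayley_filter hRC hCS hclosed using 1
  ext ⟨a, b, s⟩
  simp only [mem_cosetSquare, R, C, Sy, mem_filter, mem_cayley, mem_univ, true_and]
  constructor
  · rintro ⟨rfl, ha, hb⟩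
    exact ⟨rfl, ha, hb, by simpa [mul_assoc] using K.mul_mem ha hb⟩
  · rintro ⟨hmul, ha, hb, -⟩
    exact ⟨hmul, ha, hb⟩

lemma CayleyClosed.filter_eq_cosetSquare {R C Sy : Finset G} (h : CayleyClosed R C Sy) {r c : G}
    (hr : r ∈ R) (hc : c ∈ C) :
    ((cayley G).filter fun e => e.1 ∈ R ∧ e.2.1 ∈ C ∧ e.2.2 ∈ Sy) =
      cosetSquare (h.colSubgroup hr hc) r c := by
  ext ⟨a, b, s⟩
  simp only [mem_cosetSquare, h.mem_colSubgroup, mem_filter, mem_cayley, inv_mul_cancel_right,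
    ← h.mem_rows_iff hr hc]
  constructor
  · rintro ⟨hmul, ha, hb, -⟩
    exact ⟨hmul, ha, hb⟩
  · rintro ⟨rfl, ha, hb⟩
    exact ⟨rfl, ha, hb, h.mul_mem a ha b hb⟩

lemma exists_eq_cosetSquare_of_isSubsquare {S : Finset (Entry G)} (hS : IsSubsquare (cayley G) S)
    {r c : G} (hr : ∃ e ∈ S, onLine e (0, r)) (hc : ∃ e ∈ S, onLine e (1, c)) :
    ∃ H : Subgroup G, S = cosetSquare H r c := by
  obtain ⟨R, C, Sy, h, rfl⟩ := exists_cayleyClosed_of_isSubsquare hS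
  obtain ⟨e, he, her⟩ := hr
  obtain ⟨e', he', hec⟩ := hc
  exact ⟨_, h.filter_eq_cosetSquare (onLine_row.1 her ▸ (mem_filter.1 he).2.1)
    (onLine_col.1 hec ▸ (mem_filter.1 he').2.2.1)⟩

/-- The element `c* * c⁻¹` attached to the line `ℓ`. -/
def lineOffset (r c : G) (ℓ : Line G) : G :=
  if ℓ.1 = 1 then ℓ.2 * c⁻¹ else if ℓ.1 = 2 then r⁻¹ * ℓ.2 * c⁻¹ else r⁻¹ * ℓ.2

lemma exists_mem_cosetSquare_onLine_iff {K : Subgroup G} {r c : G} {ℓ : Line G} :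
    (∃ e ∈ cosetSquare K r c, onLine e ℓ) ↔ lineOffset r c ℓ ∈ K := by
  obtain ⟨t, g⟩ := ℓ
  fin_cases t <;> simp [lineOffset, mem_cosetSquare]
  · exact fun _ => ⟨c, by simp⟩
  · exact fun _ => ⟨r, by simp⟩
  · refine ⟨fun ⟨a, b, hab, ha, hb⟩ => ?_, fun hg => ⟨r, r⁻¹ * g, by simp, by simp, hg⟩⟩
    simpa [← hab, mul_assoc] using K.mul_mem ha hb

lemma le_of_cosetSquare_subset {H K : Subgroup G} {r c : G}
    (hHK : cosetSquare H r c ⊆ cosetSquare K r c) : H ≤ K := by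
  intro x hx
  obtain ⟨e, he, hline⟩ : ∃ e ∈ cosetSquare H r c, onLine e (1, x * c) :=
    exists_mem_cosetSquare_onLine_iff.2 (by simpa [lineOffset] using hx)
  simpa [lineOffset] using exists_mem_cosetSquare_onLine_iff.1 ⟨e, hHK he, hline⟩

lemma columns_cosetSquare (K : Subgroup G) (r c : G) :
    {g : G | ∃ e ∈ cosetSquare K r c, e.2.1 = g} = {g : G | ∃ h ∈ K, g = h * c} := by
  ext g
  simp only [Set.mem_ofPred_eq, ← onLine_col, exists_mem_cosetSquare_onLine_iff, lineOffset]
  simp only [Fin.reduceEq, if_true]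
  exact ⟨fun hg => ⟨_, hg, by group⟩, by rintro ⟨h, hh, rfl⟩; simpa using hh⟩

lemma rows_cosetSquare (K : Subgroup G) (r c : G) :
    {g : G | ∃ e ∈ cosetSquare K r c, e.1 = g} = {g : G | ∃ h ∈ K, g = r * h} := by
  ext g
  simp only [Set.mem_ofPred_eq, ← onLine_row, exists_mem_cosetSquare_onLine_iff, lineOffset]
  simp only [Fin.reduceEq, if_false]
  exact ⟨fun hg => ⟨_, hg, by group⟩, by rintro ⟨h, hh, rfl⟩; simpa using hh⟩

end Cayley

theorem stmt17_general {G : Type*} [Group G] [Fintype G] [DecidableEq G]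
    (LG : Finset (Entry G)) (hLG : LG = Finset.univ.filter (fun e => e.1 * e.2.1 = e.2.2))
    (k : ℕ) (ℓ : Fin k → Line G)
    (r c : G) (cstar : Fin k → G)
    (hcstar : ∀ i, cstar i =
      if (ℓ i).1 = 1 then (ℓ i).2
      else if (ℓ i).1 = 2 then r⁻¹ * (ℓ i).2
      else r⁻¹ * (ℓ i).2 * c)
    (s : Fin k → G) (hs : ∀ i, s i = cstar i * c⁻¹)
    (K : Subgroup G) (hK : K = Subgroup.closure (Set.range s))
    (S : Finset (Entry G)) (hsub : IsSubsquare LG S)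
    (hr : ∃ e ∈ S, onLine e ((0 : Fin 3), r))
    (hc : ∃ e ∈ S, onLine e ((1 : Fin 3), c))
    (hl : ∀ i, ∃ e ∈ S, onLine e (ℓ i))
    (hmin : ∀ T : Finset (Entry G), IsSubsquare LG T →
      (∃ e ∈ T, onLine e ((0 : Fin 3), r)) → (∃ e ∈ T, onLine e ((1 : Fin 3), c)) →
      (∀ i, ∃ e ∈ T, onLine e (ℓ i)) → S ⊆ T) :
    {g : G | ∃ e ∈ S, e.2.1 = g} = {g : G | ∃ h ∈ K, g = h * c} ∧
      {g : G | ∃ e ∈ S, e.1 = g} = {g : G | ∃ h ∈ K, g = r * h} := by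
  obtain rfl : LG = cayley G := hLG
  have hs_eq i : s i = lineOffset r c (ℓ i) := by
    rw [hs, hcstar, lineOffset]
    split_ifs <;> group
  obtain ⟨H, rfl⟩ := exists_eq_cosetSquare_of_isSubsquare hsub hr hc
  have hKH : K ≤ H := hK ▸ (Subgroup.closure_le H).2 (Set.range_subset_iff.2 fun i =>
    hs_eq i ▸ exists_mem_cosetSquare_onLine_iff.1 (hl i))
  have hHK : H ≤ K := by
    refine le_of_cosetSquare_subset (hmin _ (isSubsquare_cosetSquare K r c) ?_ ?_ fun i => ?_)
    · exact exists_mem_cosetSquare_onLine_iff.2 (by simp [lineOffset])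
    · exact exists_mem_cosetSquare_onLine_iff.2 (by simp [lineOffset])
    · exact exists_mem_cosetSquare_onLine_iff.2 (hs_eq i ▸ hK ▸ Subgroup.subset_closure ⟨i, rfl⟩)
  obtain rfl := le_antisymm hHK hKH
  exact ⟨columns_cosetSquare H r c, rows_cosetSquare H r c⟩

theorem stmt17 {G : Type*} [Group G] [Fintype G] [DecidableEq G]
    (LG : Finset (Entry G)) (hLG : LG = Finset.univ.filter (fun e => e.1 * e.2.1 = e.2.2))
    (k : ℕ) (ℓ : Fin k → Line G) (hdist : Function.Injective ℓ)
    (r c : G) (cstar : Fin k → G)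
    (hcstar : ∀ i, cstar i =
      if (ℓ i).1 = 1 then (ℓ i).2
      else if (ℓ i).1 = 2 then r⁻¹ * (ℓ i).2
      else r⁻¹ * (ℓ i).2 * c)
    (s : Fin k → G) (hs : ∀ i, s i = cstar i * c⁻¹)
    (K : Subgroup G) (hK : K = Subgroup.closure (Set.range s))
    (S : Finset (Entry G)) (hsub : IsSubsquare LG S)
    (hr : ∃ e ∈ S, onLine e ((0 : Fin 3), r))
    (hc : ∃ e ∈ S, onLine e ((1 : Fin 3), c))
    (hl : ∀ i, ∃ e ∈ S, onLine e (ℓ i))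
    (hmin : ∀ T : Finset (Entry G), IsSubsquare LG T →
      (∃ e ∈ T, onLine e ((0 : Fin 3), r)) → (∃ e ∈ T, onLine e ((1 : Fin 3), c)) →
      (∀ i, ∃ e ∈ T, onLine e (ℓ i)) → S ⊆ T) :
    {g : G | ∃ e ∈ S, e.2.1 = g} = {g : G | ∃ h ∈ K, g = h * c} ∧
      {g : G | ∃ e ∈ S, e.1 = g} = {g : G | ∃ h ∈ K, g = r * h} :=
  stmt17_general LG hLG k ℓ r c cstar hcstar s hs K hK S hsub hr hc hl hmin
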